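/- arXiv:0706.3950 — 2 statements merged into one kernel-verified Lean document; each statement's English description precedes it below -/
import Mathlib

section
/- Let F be a k-valued function from a set A to an ordered set B (i.e., F assigns to each a in A a nonempty subset of B of size at most k, where each F(a) is finite and linearly ordered). If A contains at least two distinguished elements, then there is an ordinary function f from A^k to B whose image equals the union of the sets F(a) for a in A. -/
/-!
Sorting each `F a` lists its elements as the least, second least, … element; padding the list
with a default from `F a` gives a map `Fin k → B` with range exactly `F a`, because `#(F a) ≤ k`.
It remains to encode a pair `(a, i) : A × Fin k` by a vector `v : A^k`: put `a` in the first
coordinate and read `i` off the remaining `k - 1` coordinates as the number of them equal to `a₂`,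
which can be any value `≤ k - 1` since `a₂` has a different companion `a₁` to fill the rest.
-/

open Finset Function

theorem Finset.range_getD_sort {B : Type*} [LinearOrder B] (s : Finset B) {k : ℕ}
    (hk : #s ≤ k) {d : B} (hd : d ∈ s) :
    Set.range (fun i : Fin k => (s.sort (· ≤ ·)).getD i d) = s := by
  ext b
  simp only [Set.mem_range, mem_coe]
  constructor
  · rintro ⟨i, rfl⟩
    rcases lt_or_ge (i : ℕ) (s.sort (· ≤ ·)).length with hi | hi
    · rw [List.getD_eq_getElem _ _ hi, ← mem_sort (· ≤ ·)]
      exact List.getElem_mem hi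
    · rwa [List.getD_eq_default _ _ hi]
  · intro hb
    obtain ⟨i, hi, rfl⟩ := List.getElem_of_mem ((mem_sort (· ≤ ·)).mpr hb)
    have hik : i < k := (length_sort (α := B) (· ≤ ·) ▸ hi).trans_le hk
    exact ⟨⟨i, hik⟩, List.getD_eq_getElem _ _ hi⟩

section CountEq

variable {A : Type*} [DecidableEq A]

def countEq {n : ℕ} (a : A) (w : Fin n → A) : Fin (n + 1) :=
  ⟨#{j | w j = a}, Nat.lt_succ_of_le ((card_filter_le _ _).trans_eq (card_fin n))⟩

theorem countEq_surjective {a₁ a₂ : A} (h : a₁ ≠ a₂) (n : ℕ) :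
    Surjective (countEq (n := n) a₂) := by
  intro i
  refine ⟨fun j => if (j : ℕ) < i then a₂ else a₁, Fin.ext ?_⟩
  simp only [countEq, ite_eq_left_iff, not_lt, h, imp_false, not_le, Fin.card_filter_val_lt,
    inf_eq_right]
  omega

theorem surjective_head_countEq_tail {a₁ a₂ : A} (h : a₁ ≠ a₂) (n : ℕ) :
    Surjective fun v : Fin (n + 1) → A => (v 0, countEq a₂ (Fin.tail v)) := by
  rintro ⟨a, i⟩
  obtain ⟨w, rfl⟩ := countEq_surjective h n i
  exact ⟨Fin.cons a w, by simp only [Fin.cons_zero, Fin.tail_cons]⟩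

end CountEq

/-- A `k`-valued function `F : A → B` (each value a nonempty finite subset of the
linearly ordered set `B` of size at most `k`) can be replaced, provided `A` has two
distinguished elements, by an ordinary function `f : A^k → B` with the same image. -/
theorem kValued_to_function {A B : Type*} [LinearOrder B] (k : ℕ)
    (F : A → Finset B) (hne : ∀ a, (F a).Nonempty) (hcard : ∀ a, (F a).card ≤ k)
    (a₁ a₂ : A) (ha : a₁ ≠ a₂) :
    ∃ f : (Fin k → A) → B, Set.range f = {b : B | ∃ a : A, b ∈ F a} := by
  classical
  obtain ⟨n, rfl⟩ : ∃ n, k = n + 1 :=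
    Nat.exists_eq_add_one.mpr ((hne a₁).card_pos.trans_le (hcard a₁))
  let g : A × Fin (n + 1) → B := fun p =>
    ((F p.1).sort (· ≤ ·)).getD p.2 ((F p.1).min' (hne p.1))
  refine ⟨g ∘ _, (surjective_head_countEq_tail ha n).range_comp g |>.trans ?_⟩
  ext b
  simp only [Set.mem_range, Set.mem_ofPred_eq, Prod.exists]
  exact exists_congr fun a =>
    Set.ext_iff.mp ((F a).range_getD_sort (hcard a) ((F a).min'_mem (hne a))) b
end

section
/- Let R be an o-minimal expansion of an ordered group, B ⊆ R^n a cell on which two definable continuous functions f₁, f₂ : B → R satisfy f₁(x) < f₂(x) for all x ∈ B, and let D ⊆ B be a dense subset of B. Then the union over g ∈ D of the open intervals (f₁(g), f₂(g)) equals the open interval (inf f₁(B), sup f₂(B)) intersected with the appropriate endpoints, i.e., it is an interval: every d with inf f₁(B) < d < sup f₂(B) lies in some (f₁(g), f₂(g)) with g ∈ D. -/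
/-!
For a fixed `d`, the sets `{f₁ < d}` and `{d < f₂}` are relatively open in `B`, cover it because
`f₁ < f₂`, and are both nonempty. Since `B` is preconnected they overlap in a nonempty relatively
open subset of `B`, and a relatively open subset of `B` that is nonempty meets the dense set `D`.
-/

open Set

theorem ContinuousOn.exists_isOpen_forall_mem_iff {X Y : Type*} [TopologicalSpace X]
    [TopologicalSpace Y] {f : X → Y} {B : Set X} (hf : ContinuousOn f B) {t : Set Y}
    (ht : IsOpen t) : ∃ u, IsOpen u ∧ ∀ x ∈ B, x ∈ u ↔ f x ∈ t := by
  obtain ⟨u, hu, hut⟩ := continuousOn_iff'.1 hf t ht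
  exact ⟨u, hu, fun x hx => by simpa [hx] using (Set.ext_iff.1 hut x).symm⟩

theorem IsPreconnected.inter_nonempty_of_subset_closure {X : Type*} [TopologicalSpace X]
    {B D U V : Set X} (hB : IsPreconnected B) (hBD : B ⊆ closure D) (hU : IsOpen U)
    (hV : IsOpen V) (hcover : B ⊆ U ∪ V) (hBU : (B ∩ U).Nonempty) (hBV : (B ∩ V).Nonempty) :
    (D ∩ (U ∩ V)).Nonempty :=
  (closure_inter_open_nonempty_iff (hU.inter hV)).1 <|
    (hB U V hU hV hcover hBU hBV).mono (inter_subset_inter_left _ hBD)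

theorem union_of_intervals_is_interval_general {M : Type*} [LinearOrder M]
    [TopologicalSpace M] [OrderTopology M] (n : ℕ)
    (B : Set (Fin n → M)) (hB : IsPreconnected B)
    (f₁ f₂ : (Fin n → M) → M)
    (h₁ : ContinuousOn f₁ B) (h₂ : ContinuousOn f₂ B)
    (hlt : ∀ x ∈ B, f₁ x < f₂ x)
    (D : Set (Fin n → M)) (hDB : D ⊆ B) (hdense : B ⊆ closure D) :
    ∀ d : M, (∃ c ∈ B, f₁ c < d) → (∃ c ∈ B, d < f₂ c) →
      ∃ g ∈ D, f₁ g < d ∧ d < f₂ g := by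
  rintro d ⟨c₁, hc₁B, hc₁⟩ ⟨c₂, hc₂B, hc₂⟩
  obtain ⟨u₁, hu₁, hmem₁⟩ := h₁.exists_isOpen_forall_mem_iff (isOpen_Iio (a := d))
  obtain ⟨u₂, hu₂, hmem₂⟩ := h₂.exists_isOpen_forall_mem_iff (isOpen_Ioi (a := d))
  have hcover : B ⊆ u₁ ∪ u₂ := fun x hx =>
    (lt_or_ge (f₁ x) d).imp (hmem₁ x hx).2 fun h => (hmem₂ x hx).2 (h.trans_lt (hlt x hx))
  obtain ⟨g, hgD, hg₁, hg₂⟩ := hB.inter_nonempty_of_subset_closure hdense hu₁ hu₂ hcover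
    ⟨c₁, hc₁B, (hmem₁ c₁ hc₁B).2 hc₁⟩ ⟨c₂, hc₂B, (hmem₂ c₂ hc₂B).2 hc₂⟩
  exact ⟨g, hgD, (hmem₁ g (hDB hgD)).1 hg₁, (hmem₂ g (hDB hgD)).1 hg₂⟩

/-- Let `B ⊆ M^n` be a preconnected set (in an ordered abelian group `M` with its order
topology), `f₁ f₂` continuous on `B` with `f₁ < f₂` pointwise on `B`, and `D` a dense
subset of `B`.  Then `⋃_{g ∈ D} (f₁ g, f₂ g)` is an interval: every `d` with
`inf f₁(B) < d < sup f₂(B)` (i.e. `f₁ c₁ < d` and `d < f₂ c₂` for some `c₁, c₂ ∈ B`)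
lies in some `(f₁ g, f₂ g)` with `g ∈ D`. -/
theorem union_of_intervals_is_interval {M : Type*} [AddCommGroup M] [LinearOrder M] [IsOrderedAddMonoid M]
    [TopologicalSpace M] [OrderTopology M] (n : ℕ)
    (B : Set (Fin n → M)) (hB : IsPreconnected B)
    (f₁ f₂ : (Fin n → M) → M)
    (h₁ : ContinuousOn f₁ B) (h₂ : ContinuousOn f₂ B)
    (hlt : ∀ x ∈ B, f₁ x < f₂ x)
    (D : Set (Fin n → M)) (hDB : D ⊆ B) (hdense : B ⊆ closure D) :
    ∀ d : M, (∃ c ∈ B, f₁ c < d) → (∃ c ∈ B, d < f₂ c) →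
      ∃ g ∈ D, f₁ g < d ∧ d < f₂ g :=
  union_of_intervals_is_interval_general n B hB f₁ f₂ h₁ h₂ hlt D hDB hdense
end
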